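/- arXiv:math-ph/9905001 — 2 statements merged into one kernel-verified Lean document; each statement's English description precedes it below -/
import Mathlib

section
/- Traces (multiplicities) of the fundamental projections on trace-free symmetric two-tensors: the traces of the endomorphisms Π₁, Π₂, Π₃ of Sym²₀(ℝ^m) are tr Π₁ = (m+1)(m−2)/2, tr Π₂ = m − 1, tr Π₃ = 1. -/
open Matrix

namespace NLT

/-- `|ξ|²`, the squared Euclidean norm of `ξ ∈ ℝ^m`. -/
noncomputable def nsq {m : ℕ} (ξ : Fin m → ℝ) : ℝ := ∑ i, ξ i ^ 2

/-- The space `Sym²₀(ℝ^m)` of trace-free symmetric two-tensors. -/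
def sym20 (m : ℕ) : Submodule ℝ (Matrix (Fin m) (Fin m) ℝ) where
  carrier := {φ | φ.IsSymm ∧ φ.trace = 0}
  add_mem' := fun ha hb => ⟨ha.1.add hb.1, by simp [Matrix.trace_add, ha.2, hb.2]⟩
  zero_mem' := ⟨Matrix.isSymm_zero, by simp⟩
  smul_mem' := fun c a ha => ⟨ha.1.smul c, by simp [Matrix.trace_smul, ha.2]⟩

theorem mem_sym20 {m : ℕ} {φ : Matrix (Fin m) (Fin m) ℝ} :
    φ ∈ sym20 m ↔ φ.IsSymm ∧ φ.trace = 0 := Iff.rfl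

/-- `X₂` as a linear map: `(X₂φ)_{αβ} = (1/(2|ξ|²)) (ξ_α (φξ)_β + ξ_β (φξ)_α)`. -/
noncomputable def X2L {m : ℕ} (ξ : Fin m → ℝ) :
    Matrix (Fin m) (Fin m) ℝ →ₗ[ℝ] Matrix (Fin m) (Fin m) ℝ where
  toFun φ := Matrix.of fun α β => (1 / (2 * nsq ξ)) * (ξ α * φ.mulVec ξ β + ξ β * φ.mulVec ξ α)
  map_add' a b := by
    ext α β
    simp [Matrix.add_mulVec, Matrix.add_apply]
    ring
  map_smul' c a := by
    ext α β
    simp [Matrix.smul_mulVec, Matrix.smul_apply, smul_eq_mul]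
    ring

/-- `X₄` as a linear map: `(X₄φ)_{αβ} = (1/|ξ|²) δ_{αβ} ⟨ξ, φξ⟩`. -/
noncomputable def X4L {m : ℕ} (ξ : Fin m → ℝ) :
    Matrix (Fin m) (Fin m) ℝ →ₗ[ℝ] Matrix (Fin m) (Fin m) ℝ where
  toFun φ := Matrix.of fun α β =>
    (1 / nsq ξ) * (if α = β then (1 : ℝ) else 0) * (ξ ⬝ᵥ φ.mulVec ξ)
  map_add' a b := by
    ext α β
    simp [Matrix.add_mulVec, Matrix.add_apply, dotProduct_add]
    split <;> ring
  map_smul' c a := by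
    ext α β
    simp [Matrix.smul_mulVec, Matrix.smul_apply, smul_eq_mul, dotProduct_smul]
    split <;> ring

/-- `X₅` as a linear map: `(X₅φ)_{αβ} = (1/|ξ|⁴) ξ_α ξ_β ⟨ξ, φξ⟩`. -/
noncomputable def X5L {m : ℕ} (ξ : Fin m → ℝ) :
    Matrix (Fin m) (Fin m) ℝ →ₗ[ℝ] Matrix (Fin m) (Fin m) ℝ where
  toFun φ := Matrix.of fun α β => (1 / (nsq ξ) ^ 2) * (ξ α * ξ β * (ξ ⬝ᵥ φ.mulVec ξ))
  map_add' a b := by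
    ext α β
    simp [Matrix.add_mulVec, Matrix.add_apply, dotProduct_add]
    ring
  map_smul' c a := by
    ext α β
    simp [Matrix.smul_mulVec, Matrix.smul_apply, smul_eq_mul, dotProduct_smul]
    ring

/-- `Y₂ = X₂ − (1/m) X₄`. -/
noncomputable def Y2L {m : ℕ} (ξ : Fin m → ℝ) :
    Matrix (Fin m) (Fin m) ℝ →ₗ[ℝ] Matrix (Fin m) (Fin m) ℝ :=
  X2L ξ - ((1 : ℝ) / m) • X4L ξ

/-- `Y₅ = X₅ − (1/m) X₄`. -/
noncomputable def Y5L {m : ℕ} (ξ : Fin m → ℝ) :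
    Matrix (Fin m) (Fin m) ℝ →ₗ[ℝ] Matrix (Fin m) (Fin m) ℝ :=
  X5L ξ - ((1 : ℝ) / m) • X4L ξ

/-- `Π₁ = id − 2Y₂ + ((m−2)/(m−1)) Y₅`. -/
noncomputable def Pi1L {m : ℕ} (ξ : Fin m → ℝ) :
    Matrix (Fin m) (Fin m) ℝ →ₗ[ℝ] Matrix (Fin m) (Fin m) ℝ :=
  LinearMap.id - (2 : ℝ) • Y2L ξ + (((m : ℝ) - 2) / ((m : ℝ) - 1)) • Y5L ξ

/-- `Π₂ = 2(Y₂ − Y₅)`. -/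
noncomputable def Pi2L {m : ℕ} (ξ : Fin m → ℝ) :
    Matrix (Fin m) (Fin m) ℝ →ₗ[ℝ] Matrix (Fin m) (Fin m) ℝ :=
  (2 : ℝ) • (Y2L ξ - Y5L ξ)

/-- `Π₃ = (m/(m−1)) Y₅`. -/
noncomputable def Pi3L {m : ℕ} (ξ : Fin m → ℝ) :
    Matrix (Fin m) (Fin m) ℝ →ₗ[ℝ] Matrix (Fin m) (Fin m) ℝ :=
  ((m : ℝ) / ((m : ℝ) - 1)) • Y5L ξ

theorem X2L_isSymm {m : ℕ} (ξ : Fin m → ℝ) (φ : Matrix (Fin m) (Fin m) ℝ) :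
    (X2L ξ φ).IsSymm := by
  unfold Matrix.IsSymm
  ext α β
  simp only [Matrix.transpose_apply, X2L, LinearMap.coe_mk, AddHom.coe_mk, Matrix.of_apply]
  ring

theorem X4L_isSymm {m : ℕ} (ξ : Fin m → ℝ) (φ : Matrix (Fin m) (Fin m) ℝ) :
    (X4L ξ φ).IsSymm := by
  unfold Matrix.IsSymm
  ext α β
  by_cases h : α = β <;> simp [X4L, Matrix.transpose_apply, h]
  intro h'
  exact absurd h'.symm h

theorem X5L_isSymm {m : ℕ} (ξ : Fin m → ℝ) (φ : Matrix (Fin m) (Fin m) ℝ) :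
    (X5L ξ φ).IsSymm := by
  unfold Matrix.IsSymm
  ext α β
  simp only [Matrix.transpose_apply, X5L, LinearMap.coe_mk, AddHom.coe_mk, Matrix.of_apply]
  ring

theorem X2L_trace {m : ℕ} (ξ : Fin m → ℝ) (φ : Matrix (Fin m) (Fin m) ℝ) :
    (X2L ξ φ).trace = (1 / nsq ξ) * (ξ ⬝ᵥ φ.mulVec ξ) := by
  simp [X2L, Matrix.trace, Matrix.diag, dotProduct, Finset.mul_sum]
  apply Finset.sum_congr rfl
  intros
  ring

theorem X4L_trace {m : ℕ} (ξ : Fin m → ℝ) (φ : Matrix (Fin m) (Fin m) ℝ) :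
    (X4L ξ φ).trace = (m : ℝ) * ((1 / nsq ξ) * (ξ ⬝ᵥ φ.mulVec ξ)) := by
  simp [X4L, Matrix.trace, Matrix.diag, Finset.sum_const, Finset.card_univ]

theorem X5L_trace {m : ℕ} (ξ : Fin m → ℝ) (φ : Matrix (Fin m) (Fin m) ℝ) :
    (X5L ξ φ).trace = (1 / nsq ξ) * (ξ ⬝ᵥ φ.mulVec ξ) := by
  have h : (X5L ξ φ).trace = (1 / (nsq ξ) ^ 2) * nsq ξ * (ξ ⬝ᵥ φ.mulVec ξ) := by
    simp only [X5L, LinearMap.coe_mk, AddHom.coe_mk, Matrix.trace, Matrix.diag_apply,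
      Matrix.of_apply, nsq, Finset.sum_mul, Finset.mul_sum]
    apply Finset.sum_congr rfl
    intros
    ring
  rw [h]
  rcases eq_or_ne (nsq ξ) 0 with h0 | h0
  · simp [h0]
  · field_simp

theorem Y2L_mem {m : ℕ} (hm : 2 ≤ m) (ξ : Fin m → ℝ) (φ : Matrix (Fin m) (Fin m) ℝ) :
    Y2L ξ φ ∈ sym20 m := by
  have hm' : (m : ℝ) ≠ 0 := Nat.cast_ne_zero.mpr (by omega)
  have happ : Y2L ξ φ = X2L ξ φ - ((1 : ℝ) / m) • X4L ξ φ := by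
    simp [Y2L]
  rw [mem_sym20, happ]
  constructor
  · exact (X2L_isSymm ξ φ).sub ((X4L_isSymm ξ φ).smul _)
  · rw [Matrix.trace_sub, Matrix.trace_smul, X2L_trace, X4L_trace, smul_eq_mul]
    field_simp
    simp

theorem Y5L_mem {m : ℕ} (hm : 2 ≤ m) (ξ : Fin m → ℝ) (φ : Matrix (Fin m) (Fin m) ℝ) :
    Y5L ξ φ ∈ sym20 m := by
  have hm' : (m : ℝ) ≠ 0 := Nat.cast_ne_zero.mpr (by omega)
  have happ : Y5L ξ φ = X5L ξ φ - ((1 : ℝ) / m) • X4L ξ φ := by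
    simp [Y5L]
  rw [mem_sym20, happ]
  constructor
  · exact (X5L_isSymm ξ φ).sub ((X4L_isSymm ξ φ).smul _)
  · rw [Matrix.trace_sub, Matrix.trace_smul, X5L_trace, X4L_trace, smul_eq_mul]
    field_simp
    simp

theorem Pi1L_mem {m : ℕ} (hm : 2 ≤ m) (ξ : Fin m → ℝ) :
    ∀ φ ∈ sym20 m, Pi1L ξ φ ∈ sym20 m := by
  intro φ hφ
  have happ : Pi1L ξ φ
      = φ - (2 : ℝ) • Y2L ξ φ + (((m : ℝ) - 2) / ((m : ℝ) - 1)) • Y5L ξ φ := by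
    simp [Pi1L]
  rw [happ]
  exact add_mem (sub_mem hφ (Submodule.smul_mem _ _ (Y2L_mem hm ξ φ)))
    (Submodule.smul_mem _ _ (Y5L_mem hm ξ φ))

theorem Pi2L_mem {m : ℕ} (hm : 2 ≤ m) (ξ : Fin m → ℝ) :
    ∀ φ ∈ sym20 m, Pi2L ξ φ ∈ sym20 m := by
  intro φ hφ
  have happ : Pi2L ξ φ = (2 : ℝ) • (Y2L ξ φ - Y5L ξ φ) := by
    simp [Pi2L]
  rw [happ]
  exact Submodule.smul_mem _ _ (sub_mem (Y2L_mem hm ξ φ) (Y5L_mem hm ξ φ))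

theorem Pi3L_mem {m : ℕ} (hm : 2 ≤ m) (ξ : Fin m → ℝ) :
    ∀ φ ∈ sym20 m, Pi3L ξ φ ∈ sym20 m := by
  intro φ hφ
  have happ : Pi3L ξ φ = ((m : ℝ) / ((m : ℝ) - 1)) • Y5L ξ φ := by
    simp [Pi3L]
  rw [happ]
  exact Submodule.smul_mem _ _ (Y5L_mem hm ξ φ)


/-! Each `Πᵢ` agrees on `Sym²₀(ℝ^m)` with an endomorphism of the whole matrix space taking values
in `Sym²₀(ℝ^m)`: `Π₂` and `Π₃` themselves, and for `Π₁` the one obtained by replacing `id` with the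
projection `φ ↦ (φ + φᵀ)/2 − (tr φ / m)·1`. The trace of such a restriction is the trace on the
whole space, which is computed in the standard basis of matrix units: `tr X₂ = (m + 1)/2`,
`tr X₄ = tr X₅ = 1`, and the projection has trace `dim Sym²₀ = m(m + 1)/2 − 1`. -/

theorem trace_eq_sum_single {R m n : Type*} [CommRing R] [Fintype m] [Fintype n] [DecidableEq m]
    [DecidableEq n] (f : Matrix m n R →ₗ[R] Matrix m n R) :
    LinearMap.trace R _ f = ∑ i, ∑ j, f (single i j 1) i j := by
  rw [LinearMap.trace_eq_matrix_trace R (stdBasis R m n), Matrix.trace, ← Fintype.sum_prod_type']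
  refine Finset.sum_congr rfl fun p _ => ?_
  rw [diag_apply, LinearMap.toMatrix_apply, stdBasis_eq_single]
  rfl

theorem trace_restrict_eq_of_eqOn {R M : Type*} [CommRing R] [IsDomain R] [IsPrincipalIdealRing R]
    [AddCommGroup M] [Module R M] [Module.Finite R M] [Module.Free R M]
    {p : Submodule R M} {f g : M →ₗ[R] M} (hf : ∀ x ∈ p, f x ∈ p) (hg : ∀ x, g x ∈ p)
    (hfg : ∀ x ∈ p, f x = g x) :
    LinearMap.trace R p (f.restrict hf) = LinearMap.trace R M g := by
  rw [← LinearMap.trace_restrict_eq_of_forall_mem p g hg]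
  congr 1
  ext x
  exact hfg x x.2

theorem nsq_eq_dotProduct {m : ℕ} (ξ : Fin m → ℝ) : nsq ξ = ξ ⬝ᵥ ξ := by
  simp [nsq, dotProduct, sq]

theorem nsq_ne_zero {m : ℕ} {ξ : Fin m → ℝ} (hξ : ξ ≠ 0) : nsq ξ ≠ 0 := by
  rwa [nsq_eq_dotProduct, Ne, dotProduct_self_eq_zero]

theorem single_mulVec_apply {R n : Type*} [Semiring R] [Fintype n] [DecidableEq n] (ξ : n → R)
    (i j k : n) :
    (single i j 1 *ᵥ ξ) k = if k = i then ξ j else 0 := by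
  simp [single_mulVec, Function.update_apply]

theorem dotProduct_single_mulVec {R n : Type*} [CommSemiring R] [Fintype n] [DecidableEq n]
    (ξ : n → R) (i j : n) :
    ξ ⬝ᵥ (single i j 1 *ᵥ ξ) = ξ i * ξ j := by
  simp [single_mulVec_eq, dotProduct_smul, mul_comm]

theorem sum_mul_self_eq_nsq {m : ℕ} (ξ : Fin m → ℝ) : ∑ i, ξ i * ξ i = nsq ξ := by
  simp [nsq, sq]

theorem trace_X2L {m : ℕ} {ξ : Fin m → ℝ} (hξ : ξ ≠ 0) :
    LinearMap.trace ℝ _ (X2L ξ) = ((m : ℝ) + 1) / 2 := by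
  have hs := nsq_ne_zero hξ
  simp only [trace_eq_sum_single, X2L, LinearMap.coe_mk, AddHom.coe_mk, of_apply,
    single_mulVec_apply, ← Finset.mul_sum, Finset.sum_add_distrib, mul_ite, mul_zero,
    Finset.sum_ite_eq', Finset.mem_univ, if_true, sum_mul_self_eq_nsq, Finset.sum_const,
    Finset.card_univ, Fintype.card_fin, nsmul_eq_mul]
  field_simp
  ring

theorem trace_X4L {m : ℕ} {ξ : Fin m → ℝ} (hξ : ξ ≠ 0) :
    LinearMap.trace ℝ _ (X4L ξ) = 1 := by
  have hs := nsq_ne_zero hξ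
  simp only [trace_eq_sum_single, X4L, LinearMap.coe_mk, AddHom.coe_mk, of_apply,
    dotProduct_single_mulVec, ← Finset.mul_sum, mul_ite, mul_one, mul_zero, ite_mul, zero_mul,
    Finset.sum_ite_eq, Finset.mem_univ, if_true, sum_mul_self_eq_nsq]
  field_simp

theorem trace_X5L {m : ℕ} {ξ : Fin m → ℝ} (hξ : ξ ≠ 0) :
    LinearMap.trace ℝ _ (X5L ξ) = 1 := by
  have hs := nsq_ne_zero hξ
  simp only [trace_eq_sum_single, X5L, LinearMap.coe_mk, AddHom.coe_mk, of_apply,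
    dotProduct_single_mulVec]
  have hsq : ∀ i j, ξ i * ξ j * (ξ i * ξ j) = ξ i * ξ i * (ξ j * ξ j) := fun i j => by ring
  simp only [hsq, ← Finset.mul_sum, ← Finset.sum_mul, sum_mul_self_eq_nsq]
  field_simp

theorem trace_transposeLinearEquiv {R n : Type*} [CommRing R] [Fintype n] [DecidableEq n] :
    LinearMap.trace R _ (transposeLinearEquiv n n R R).toLinearMap = Fintype.card n := by
  simp [trace_eq_sum_single, single_apply, eq_comm]

noncomputable def symTracelessProj (m : ℕ) :
    Matrix (Fin m) (Fin m) ℝ →ₗ[ℝ] Matrix (Fin m) (Fin m) ℝ :=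
  (1 / 2 : ℝ) • (LinearMap.id + (transposeLinearEquiv (Fin m) (Fin m) ℝ ℝ).toLinearMap) -
    (1 / m : ℝ) • (traceLinearMap (Fin m) ℝ ℝ).smulRight 1

theorem symTracelessProj_apply (m : ℕ) (φ : Matrix (Fin m) (Fin m) ℝ) :
    symTracelessProj m φ = (1 / 2 : ℝ) • (φ + φᵀ) - (1 / m * φ.trace) • 1 := by
  simp [symTracelessProj, smul_smul]

theorem symTracelessProj_mem {m : ℕ} (hm : m ≠ 0) (φ : Matrix (Fin m) (Fin m) ℝ) :
    symTracelessProj m φ ∈ sym20 m := by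
  refine ⟨?_, ?_⟩
  · rw [symTracelessProj_apply]
    exact ((isSymm_add_transpose_self φ).smul _).sub (isSymm_one.smul _)
  · simp only [symTracelessProj_apply, trace_sub, trace_smul, trace_add, trace_transpose,
      trace_one, Fintype.card_fin, smul_eq_mul]
    field_simp
    ring

theorem symTracelessProj_eq_self {m : ℕ} {φ : Matrix (Fin m) (Fin m) ℝ} (hφ : φ ∈ sym20 m) :
    symTracelessProj m φ = φ := by
  obtain ⟨hsymm, htr⟩ := hφ
  rw [symTracelessProj_apply, hsymm.eq, htr]
  module

theorem trace_symTracelessProj {m : ℕ} (hm : m ≠ 0) :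
    LinearMap.trace ℝ _ (symTracelessProj m) = ((m : ℝ) ^ 2 + m) / 2 - 1 := by
  simp only [symTracelessProj, map_sub, map_add, map_smul, LinearMap.trace_id,
    trace_transposeLinearEquiv, LinearMap.trace_smulRight, traceLinearMap_apply, trace_one,
    Module.finrank_matrix, Module.finrank_self, Fintype.card_fin, mul_one, Nat.cast_mul,
    smul_eq_mul]
  field_simp

theorem trace_Y2L {m : ℕ} {ξ : Fin m → ℝ} (hξ : ξ ≠ 0) :
    LinearMap.trace ℝ _ (Y2L ξ) = ((m : ℝ) + 1) / 2 - 1 / m := by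
  rw [Y2L, map_sub, map_smul, trace_X2L hξ, trace_X4L hξ, smul_eq_mul, mul_one]

theorem trace_Y5L {m : ℕ} {ξ : Fin m → ℝ} (hξ : ξ ≠ 0) :
    LinearMap.trace ℝ _ (Y5L ξ) = 1 - 1 / m := by
  rw [Y5L, map_sub, map_smul, trace_X5L hξ, trace_X4L hξ, smul_eq_mul, mul_one]

theorem trace_restrict_Pi1L {m : ℕ} (hm : 2 ≤ m) {ξ : Fin m → ℝ} (hξ : ξ ≠ 0) :
    LinearMap.trace ℝ (sym20 m) ((Pi1L ξ).restrict (Pi1L_mem hm ξ))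
      = ((m : ℝ) + 1) * ((m : ℝ) - 2) / 2 := by
  have hm0 : m ≠ 0 := by omega
  have hm1 : (m : ℝ) - 1 ≠ 0 := sub_ne_zero.2 (Nat.cast_ne_one.2 (by omega))
  have hproj : LinearMap.trace ℝ (sym20 m) ((Pi1L ξ).restrict (Pi1L_mem hm ξ)) =
      LinearMap.trace ℝ _
        (symTracelessProj m - (2 : ℝ) • Y2L ξ + (((m : ℝ) - 2) / ((m : ℝ) - 1)) • Y5L ξ) :=
    trace_restrict_eq_of_eqOn _
      (fun φ => add_mem (sub_mem (symTracelessProj_mem hm0 φ)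
        (Submodule.smul_mem _ _ (Y2L_mem hm ξ φ))) (Submodule.smul_mem _ _ (Y5L_mem hm ξ φ)))
      (fun φ hφ => by simp [Pi1L, symTracelessProj_eq_self hφ])
  rw [hproj, map_add, map_sub, map_smul, map_smul, trace_symTracelessProj hm0, trace_Y2L hξ,
    trace_Y5L hξ, smul_eq_mul, smul_eq_mul]
  field_simp
  ring

theorem trace_restrict_Pi2L {m : ℕ} (hm : 2 ≤ m) {ξ : Fin m → ℝ} (hξ : ξ ≠ 0) :
    LinearMap.trace ℝ (sym20 m) ((Pi2L ξ).restrict (Pi2L_mem hm ξ)) = (m : ℝ) - 1 := by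
  have hm0 : (m : ℝ) ≠ 0 := Nat.cast_ne_zero.2 (by omega)
  rw [trace_restrict_eq_of_eqOn _
      (fun φ => Submodule.smul_mem _ _ (sub_mem (Y2L_mem hm ξ φ) (Y5L_mem hm ξ φ)))
      fun _ _ => rfl,
    Pi2L, map_smul, map_sub, trace_Y2L hξ, trace_Y5L hξ, smul_eq_mul]
  field_simp
  ring

theorem trace_restrict_Pi3L {m : ℕ} (hm : 2 ≤ m) {ξ : Fin m → ℝ} (hξ : ξ ≠ 0) :
    LinearMap.trace ℝ (sym20 m) ((Pi3L ξ).restrict (Pi3L_mem hm ξ)) = 1 := by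
  have hm0 : (m : ℝ) ≠ 0 := Nat.cast_ne_zero.2 (by omega)
  have hm1 : (m : ℝ) - 1 ≠ 0 := sub_ne_zero.2 (Nat.cast_ne_one.2 (by omega))
  rw [trace_restrict_eq_of_eqOn _ (fun φ => Submodule.smul_mem _ _ (Y5L_mem hm ξ φ))
      fun _ _ => rfl,
    Pi3L, map_smul, trace_Y5L hξ, smul_eq_mul]
  field_simp

/-- Traces (multiplicities) of the fundamental projections `Π₁, Π₂, Π₃`, regarded as
endomorphisms of the space `Sym²₀(ℝ^m)` of trace-free symmetric two-tensors:
`tr Π₁ = (m+1)(m−2)/2`, `tr Π₂ = m−1`, `tr Π₃ = 1`. -/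
theorem Pi_traces (m : ℕ) (hm : 2 ≤ m) (ξ : Fin m → ℝ) (hξ : ξ ≠ 0) :
    LinearMap.trace ℝ (sym20 m) ((Pi1L ξ).restrict (Pi1L_mem hm ξ))
      = ((m : ℝ) + 1) * ((m : ℝ) - 2) / 2 ∧
    LinearMap.trace ℝ (sym20 m) ((Pi2L ξ).restrict (Pi2L_mem hm ξ)) = (m : ℝ) - 1 ∧
    LinearMap.trace ℝ (sym20 m) ((Pi3L ξ).restrict (Pi3L_mem hm ξ)) = 1 :=
  ⟨trace_restrict_Pi1L hm hξ, trace_restrict_Pi2L hm hξ, trace_restrict_Pi3L hm hξ⟩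

end NLT
end

section
/- Relations of the nilpotent operators T, T† in the reducible symbol algebra on symmetric two-tensors: as endomorphisms of Sym²(ℝ^m), T² = 0, (T†)² = 0, T†T = id − P, TT† = Π₃, TP = 0, PT† = 0, Π₃T = T, and T†Π₃ = T†. -/
open Matrix

namespace NLT

/-- `(X₁φ)_{αβ} = δ_{αβ} tr φ`. -/
noncomputable def X1 {m : ℕ} (φ : Matrix (Fin m) (Fin m) ℝ) : Matrix (Fin m) (Fin m) ℝ :=
  Matrix.of fun α β => (if α = β then (1 : ℝ) else 0) * φ.trace

/-- `(X₂φ)_{αβ} = (1/(2|ξ|²)) (ξ_α (φξ)_β + ξ_β (φξ)_α)`. -/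
noncomputable def X2 {m : ℕ} (ξ : Fin m → ℝ) (φ : Matrix (Fin m) (Fin m) ℝ) :
    Matrix (Fin m) (Fin m) ℝ :=
  Matrix.of fun α β => (1 / (2 * nsq ξ)) * (ξ α * φ.mulVec ξ β + ξ β * φ.mulVec ξ α)

/-- `(X₃φ)_{αβ} = (1/|ξ|²) ξ_α ξ_β tr φ`. -/
noncomputable def X3 {m : ℕ} (ξ : Fin m → ℝ) (φ : Matrix (Fin m) (Fin m) ℝ) :
    Matrix (Fin m) (Fin m) ℝ :=
  Matrix.of fun α β => (1 / nsq ξ) * (ξ α * ξ β * φ.trace)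

/-- `(X₄φ)_{αβ} = (1/|ξ|²) δ_{αβ} ⟨ξ, φξ⟩`. -/
noncomputable def X4 {m : ℕ} (ξ : Fin m → ℝ) (φ : Matrix (Fin m) (Fin m) ℝ) :
    Matrix (Fin m) (Fin m) ℝ :=
  Matrix.of fun α β => (1 / nsq ξ) * (if α = β then (1 : ℝ) else 0) * (ξ ⬝ᵥ φ.mulVec ξ)

/-- `(X₅φ)_{αβ} = (1/|ξ|⁴) ξ_α ξ_β ⟨ξ, φξ⟩`. -/
noncomputable def X5 {m : ℕ} (ξ : Fin m → ℝ) (φ : Matrix (Fin m) (Fin m) ℝ) :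
    Matrix (Fin m) (Fin m) ℝ :=
  Matrix.of fun α β => (1 / (nsq ξ) ^ 2) * (ξ α * ξ β * (ξ ⬝ᵥ φ.mulVec ξ))

/-- `P = id − (1/m) X₁`, the projection onto trace-free part. -/
noncomputable def P {m : ℕ} (φ : Matrix (Fin m) (Fin m) ℝ) : Matrix (Fin m) (Fin m) ℝ :=
  φ - ((1 : ℝ) / m) • X1 φ

/-- `T = (1/√(m−1)) (X₃ − (1/m) X₁)`. -/
noncomputable def T {m : ℕ} (ξ : Fin m → ℝ) (φ : Matrix (Fin m) (Fin m) ℝ) :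
    Matrix (Fin m) (Fin m) ℝ :=
  (1 / Real.sqrt ((m : ℝ) - 1)) • (X3 ξ φ - ((1 : ℝ) / m) • X1 φ)

/-- `T† = (1/√(m−1)) (X₄ − (1/m) X₁)`. -/
noncomputable def Td {m : ℕ} (ξ : Fin m → ℝ) (φ : Matrix (Fin m) (Fin m) ℝ) :
    Matrix (Fin m) (Fin m) ℝ :=
  (1 / Real.sqrt ((m : ℝ) - 1)) • (X4 ξ φ - ((1 : ℝ) / m) • X1 φ)

/-- `Π₃ = (m/(m−1)) P X₅ P`. -/
noncomputable def Pi3A {m : ℕ} (ξ : Fin m → ℝ) (φ : Matrix (Fin m) (Fin m) ℝ) :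
    Matrix (Fin m) (Fin m) ℝ :=
  ((m : ℝ) / ((m : ℝ) - 1)) • P (X5 ξ (P φ))


section helpers
variable {m : ℕ} (ξ : Fin m → ℝ) (φ : Matrix (Fin m) (Fin m) ℝ)

lemma X1_eq : X1 φ = φ.trace • (1 : Matrix (Fin m) (Fin m) ℝ) := by
  ext α β; simp [X1, Matrix.one_apply]

lemma X3_eq : X3 ξ φ = ((1 / nsq ξ) * φ.trace) • Matrix.vecMulVec ξ ξ := by
  ext α β; simp [X3, Matrix.vecMulVec]; ring

lemma X4_eq : X4 ξ φ = ((1 / nsq ξ) * (ξ ⬝ᵥ φ.mulVec ξ)) • (1 : Matrix (Fin m) (Fin m) ℝ) := by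
  ext α β; simp [X4, Matrix.one_apply]

lemma X5_eq : X5 ξ φ = ((1 / (nsq ξ) ^ 2) * (ξ ⬝ᵥ φ.mulVec ξ)) • Matrix.vecMulVec ξ ξ := by
  ext α β; simp [X5, Matrix.vecMulVec]; ring

lemma trace_vmv : (Matrix.vecMulVec ξ ξ).trace = nsq ξ := by
  simp [Matrix.trace, Matrix.diag, Matrix.vecMulVec, nsq, sq]

lemma trace_one' : (1 : Matrix (Fin m) (Fin m) ℝ).trace = m := by
  simp [Matrix.trace_one]

lemma mulVec_vmv : (Matrix.vecMulVec ξ ξ).mulVec ξ = nsq ξ • ξ := by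
  funext i
  simp [Matrix.mulVec, Matrix.vecMulVec, dotProduct, nsq, sq, mul_assoc, ← Finset.mul_sum]
  ring

lemma quad_vmv : ξ ⬝ᵥ (Matrix.vecMulVec ξ ξ).mulVec ξ = (nsq ξ) ^ 2 := by
  rw [mulVec_vmv, dotProduct_smul]
  simp [dotProduct, nsq, sq]

lemma quad_one : ξ ⬝ᵥ (1 : Matrix (Fin m) (Fin m) ℝ).mulVec ξ = nsq ξ := by
  simp [Matrix.one_mulVec, dotProduct, nsq, sq]

lemma nsq_ne (hξ : ξ ≠ 0) : nsq ξ ≠ 0 := by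
  have : 0 < nsq ξ := by
    obtain ⟨i, hi⟩ := Function.ne_iff.mp hξ
    exact Finset.sum_pos' (fun j _ => sq_nonneg _)
      ⟨i, Finset.mem_univ i, by simpa [sq] using mul_self_pos.mpr hi⟩
  exact this.ne'

end helpers

set_option maxHeartbeats 2000000 in
/-- Relations of the nilpotent operators `T`, `T†` in the reducible symbol algebra on
symmetric two-tensors: `T² = 0`, `(T†)² = 0`, `T†T = id − P`, `TT† = Π₃`, `TP = 0`,
`PT† = 0`, `Π₃T = T`, `T†Π₃ = T†`. -/
theorem T_relations (m : ℕ) (hm : 2 ≤ m) (ξ : Fin m → ℝ) (hξ : ξ ≠ 0)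
    (φ : Matrix (Fin m) (Fin m) ℝ) (hφ : φ.IsSymm) :
    T ξ (T ξ φ) = 0 ∧
    Td ξ (Td ξ φ) = 0 ∧
    Td ξ (T ξ φ) = φ - P φ ∧
    T ξ (Td ξ φ) = Pi3A ξ φ ∧
    T ξ (P φ) = 0 ∧
    P (Td ξ φ) = 0 ∧
    Pi3A ξ (T ξ φ) = T ξ φ ∧
    Td ξ (Pi3A ξ φ) = Td ξ φ := by
  have hs : nsq ξ ≠ 0 := nsq_ne ξ hξ
  have hm2 : (2:ℝ) ≤ (m:ℝ) := by exact_mod_cast hm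
  have hm0' : (m:ℝ) ≠ 0 := by positivity
  have hrpos : 0 < Real.sqrt ((m:ℝ) - 1) := Real.sqrt_pos.mpr (by linarith)
  have hr2' : Real.sqrt ((m:ℝ) - 1) * Real.sqrt ((m:ℝ) - 1) = (m:ℝ) - 1 :=
    Real.mul_self_sqrt (by linarith)
  refine ⟨?_, ?_, ?_, ?_, ?_, ?_, ?_, ?_⟩ <;>
  · simp only [T, Td, P, Pi3A, X3_eq, X4_eq, X5_eq, X1_eq]
    simp only [Matrix.trace_smul, Matrix.trace_sub, trace_one', trace_vmv,
      Matrix.sub_mulVec, Matrix.smul_mulVec, dotProduct_sub, dotProduct_smul,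
      quad_vmv, quad_one, smul_eq_mul]
    set s := nsq ξ with hsdef
    set r := Real.sqrt ((m:ℝ) - 1) with hrdef
    have hr : r ≠ 0 := hrpos.ne'
    have hmr : (m:ℝ) = r * r + 1 := by rw [hr2']; ring
    have hm0 : r * r + 1 ≠ 0 := by positivity
    clear_value s r
    rw [hmr]
    match_scalars
    all_goals field_simp
    all_goals ring

end NLT
end
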